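/- arXiv:1003.2619 — 4 statements merged into one kernel-verified Lean document; each statement's English description precedes it below -/
import Mathlib

section
/- The inverse-probability-weighting identity: under ignorability given a finite covariate X and overlap, E[ T·Y / e(X) ] = E[Y1], where e(x) = P(T=1 | X=x) is the propensity score. -/
open MeasureTheory ProbabilityTheory Set

/-!
Split both expectations over the finitely many strata `{X = x}`. On a stratum of positive mass,
conditional independence factorises `E[1{T} · Y1 | X = x] = e x · E[Y1 | X = x]`, and overlap lets
us divide by `e x`; null strata contribute nothing to either side.
-/

section

variable {Ω : Type*} [MeasurableSpace Ω] {μ : Measure Ω}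

theorem integral_eq_sum_setIntegral_fiber {E : Type*} [NormedAddCommGroup E] [NormedSpace ℝ E]
    {S : Type*} [Fintype S] [MeasurableSpace S] [MeasurableSingletonClass S]
    {X : Ω → S} (hX : Measurable X) {f : Ω → E} (hf : ∀ x, IntegrableOn f (X ⁻¹' {x}) μ) :
    ∫ ω, f ω ∂μ = ∑ x, ∫ ω in X ⁻¹' {x}, f ω ∂μ := by
  rw [← integral_iUnion_fintype (fun x => hX (measurableSet_singleton x))
    (pairwise_disjoint_fiber X) hf, ← preimage_iUnion, iUnion_of_singleton, preimage_univ,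
    setIntegral_univ]

theorem setIntegral_eq_measureReal_smul_integral_cond {E : Type*} [NormedAddCommGroup E]
    [NormedSpace ℝ E] [IsFiniteMeasure μ] (s : Set Ω) (f : Ω → E) :
    ∫ ω in s, f ω ∂μ = μ.real s • ∫ ω, f ω ∂μ[|s] := by
  rcases eq_or_ne (μ s) 0 with hs | hs
  · simp [Measure.restrict_eq_zero.mpr hs, measureReal_def, hs]
  · rw [ProbabilityTheory.cond, integral_smul_measure, smul_smul, ENNReal.toReal_inv,
      measureReal_def, mul_inv_cancel₀ (ENNReal.toReal_ne_zero.mpr ⟨hs, measure_ne_top μ s⟩),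
      one_smul]

theorem measureReal_mul_setIntegral_indicator_of_indepFun [IsFiniteMeasure μ] {s : Set Ω}
    (hs : MeasurableSet s) {T : Ω → Bool} (hT : Measurable T) {Y : Ω → ℝ}
    (hY : AEStronglyMeasurable Y μ) (hTY : IndepFun T Y μ[|s]) :
    μ.real s * ∫ ω in s, {ω | T ω}.indicator Y ω ∂μ
      = μ.real (s ∩ {ω | T ω}) * ∫ ω in s, Y ω ∂μ := by
  have hB : MeasurableSet {ω | T ω} := hT (measurableSet_singleton true)
  set φ : Bool → ℝ := fun b => if b then 1 else 0
  have hind : {ω | T ω}.indicator Y = fun ω => φ (T ω) * Y ω := by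
    funext ω; by_cases h : T ω <;> simp [φ, h]
  have hφT : (fun ω => φ (T ω)) = {ω | T ω}.indicator 1 := by
    funext ω; by_cases h : T ω <;> simp [φ, h]
  have hfactor : ∫ ω, φ (T ω) * Y ω ∂μ[|s] = (μ[|s]).real {ω | T ω} * ∫ ω, Y ω ∂μ[|s] := by
    have h := (hTY.comp (measurable_of_countable φ) measurable_id).integral_fun_mul_eq_mul_integral
      ((measurable_of_countable φ).comp hT).aestronglyMeasurable
      (hY.mono_ac cond_absolutelyContinuous)
    simp only [Function.comp_def, id] at h
    rw [h, hφT, integral_indicator_one hB]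
  have hinter : μ.real s * (μ[|s]).real {ω | T ω} = μ.real (s ∩ {ω | T ω}) := by
    simp only [measureReal_def, ← ENNReal.toReal_mul, mul_comm (μ s), cond_mul_eq_inter hs]
  rw [setIntegral_eq_measureReal_smul_integral_cond, setIntegral_eq_measureReal_smul_integral_cond,
    hind, hfactor, ← hinter, smul_eq_mul, smul_eq_mul]
  ring

end

theorem ipw_identity_general
    {Ω : Type*} [MeasurableSpace Ω] (μ : Measure Ω) [IsProbabilityMeasure μ]
    {S : Type*} [Fintype S] [MeasurableSpace S] [MeasurableSingletonClass S]
    (X : Ω → S) (T : Ω → Bool) (Y0 Y1 : Ω → ℝ)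
    (hX : Measurable X) (hT : Measurable T)
    (hY1 : Integrable Y1 μ)
    -- propensity score
    (e : S → ℝ)
    (he : ∀ x : S, e x = (μ {ω | T ω = true ∧ X ω = x}).toReal / (μ {ω | X ω = x}).toReal)
    -- overlap
    (hoverlap : ∀ x : S, 0 < μ {ω | X ω = x} → 0 < e x ∧ e x < 1)
    -- ignorability: T independent of Y1 conditionally on each event {X = x}
    (hignor : ∀ x : S, 0 < μ {ω | X ω = x} → IndepFun T Y1 (μ[|{ω | X ω = x}]))
    (Y : Ω → ℝ) (hY : ∀ ω, Y ω = if T ω = true then Y1 ω else Y0 ω) :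
    (∫ ω, (if T ω = true then Y ω / e (X ω) else 0) ∂μ) = ∫ ω, Y1 ω ∂μ := by
  have hfiber (x : S) : MeasurableSet (X ⁻¹' {x}) := hX (measurableSet_singleton x)
  have hweighted (x : S) : EqOn (fun ω => if T ω = true then Y ω / e (X ω) else 0)
      (fun ω => (e x)⁻¹ * {ω | T ω}.indicator Y1 ω) (X ⁻¹' {x}) := by
    intro ω (hω : X ω = x)
    by_cases h : T ω <;> simp [h, hω, hY, div_eq_inv_mul]
  have hstratum (x : S) :
      ∫ ω in X ⁻¹' {x}, (e x)⁻¹ * {ω | T ω}.indicator Y1 ω ∂μ = ∫ ω in X ⁻¹' {x}, Y1 ω ∂μ := by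
    rcases eq_or_ne (μ (X ⁻¹' {x})) 0 with h0 | hne
    · simp [Measure.restrict_eq_zero.mpr h0]
    have hpos := pos_iff_ne_zero.mpr hne
    have hfactor := measureReal_mul_setIntegral_indicator_of_indepFun (hfiber x) hT
      hY1.aestronglyMeasurable (hignor x hpos)
    have hprop : e x = μ.real (X ⁻¹' {x} ∩ {ω | T ω}) / μ.real (X ⁻¹' {x}) := by
      rw [he x, inter_comm]; rfl
    have htreated : μ.real (X ⁻¹' {x} ∩ {ω | T ω}) ≠ 0 :=
      (div_ne_zero_iff.mp (hprop ▸ (hoverlap x hpos).1.ne')).1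
    rw [integral_const_mul, hprop, inv_div, div_mul_eq_mul_div, hfactor,
      mul_div_cancel_left₀ _ htreated]
  have hweightedOn (x : S) : IntegrableOn
      (fun ω => if T ω = true then Y ω / e (X ω) else 0) (X ⁻¹' {x}) μ :=
    ((hY1.indicator (hT (measurableSet_singleton true))).const_mul (e x)⁻¹).integrableOn.congr_fun
      (hweighted x).symm (hfiber x)
  rw [integral_eq_sum_setIntegral_fiber hX hweightedOn,
    integral_eq_sum_setIntegral_fiber hX fun _ => hY1.integrableOn]
  exact Finset.sum_congr rfl fun x _ =>
    (setIntegral_congr_fun (hfiber x) (hweighted x)).trans (hstratum x)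

/-- Inverse probability weighting: under ignorability given a finite covariate `X`
and overlap, `E[T·Y/e(X)] = E[Y1]` where `e` is the propensity score. -/
theorem ipw_identity
    {Ω : Type*} [MeasurableSpace Ω] (μ : Measure Ω) [IsProbabilityMeasure μ]
    {S : Type*} [Fintype S] [MeasurableSpace S] [MeasurableSingletonClass S]
    (X : Ω → S) (T : Ω → Bool) (Y0 Y1 : Ω → ℝ)
    (hX : Measurable X) (hT : Measurable T)
    (hY0 : Integrable Y0 μ) (hY1 : Integrable Y1 μ) (hY1m : Measurable Y1)
    -- propensity score
    (e : S → ℝ)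
    (he : ∀ x : S, e x = (μ {ω | T ω = true ∧ X ω = x}).toReal / (μ {ω | X ω = x}).toReal)
    -- overlap
    (hoverlap : ∀ x : S, 0 < μ {ω | X ω = x} → 0 < e x ∧ e x < 1)
    -- ignorability: T independent of Y1 conditionally on each event {X = x}
    (hignor : ∀ x : S, 0 < μ {ω | X ω = x} → IndepFun T Y1 (μ[|{ω | X ω = x}]))
    (Y : Ω → ℝ) (hY : ∀ ω, Y ω = if T ω = true then Y1 ω else Y0 ω) :
    (∫ ω, (if T ω = true then Y ω / e (X ω) else 0) ∂μ) = ∫ ω, Y1 ω ∂μ :=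
  ipw_identity_general μ X T Y0 Y1 hX hT hY1 e he hoverlap hignor Y hY
end

section
/- LATE theorem for binary instrument and no defiers: with potential treatments T(0) ≤ T(1) (monotonicity), exclusion (Y depends on Z only through T), and Z independent of all potential outcomes and potential treatments, the Wald ratio (E[Y|Z=1]-E[Y|Z=0])/(E[T|Z=1]-E[T|Z=0]) equals E[Y1 - Y0 | T(1) > T(0)], provided P(T(1) > T(0)) > 0. -/
/-!
On the event `{Z = b}` the observed outcome is `Y_{T_b}`, a function of the potential quantities
`(T0, T1, Y0, Y1)`, so independence makes its conditional mean the unconditional mean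
`E[Y_{T_b}]`. Since `T0 ≤ T1`, `Y_{T1} - Y_{T0}` vanishes off the compliers and equals `Y1 - Y0`
on them. The treatment indicator is the observed outcome for the potential outcomes `0` and `1`,
so the same computation turns the denominator into the complier probability.
-/

open MeasureTheory ProbabilityTheory

/-- Conditional expectation of `f` given the event `A`, defined as a ratio. -/
noncomputable def condMean {Ω : Type*} [MeasurableSpace Ω] (μ : Measure Ω)
    (A : Set Ω) (f : Ω → ℝ) : ℝ := (∫ ω in A, f ω ∂μ) / (μ A).toReal

section

variable {Ω : Type*} [MeasurableSpace Ω] {μ : Measure Ω}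

theorem ProbabilityTheory.IndepFun.condMean_preimage_comp [IsFiniteMeasure μ] {α β : Type*}
    [MeasurableSpace α] [MeasurableSpace β] {Z : Ω → α} {X : Ω → β} (hind : IndepFun Z X μ)
    (hZ : Measurable Z) (hX : AEMeasurable X μ) {S : Set α} (hS : MeasurableSet S)
    (hpos : μ (Z ⁻¹' S) ≠ 0) {f : β → ℝ} (hf : AEStronglyMeasurable f (μ.map X)) :
    condMean μ (Z ⁻¹' S) (fun ω => f (X ω)) = ∫ ω, f (X ω) ∂μ := by
  have hpos' : (μ (Z ⁻¹' S)).toReal ≠ 0 := ENNReal.toReal_ne_zero.mpr ⟨hpos, measure_ne_top _ _⟩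
  rw [condMean, ((IndepFun_iff_Indep Z X μ).mp hind).setIntegral_eq_mul hZ.comap_le hX
    ⟨S, hS, rfl⟩ hf, measureReal_def, mul_div_cancel_left₀ _ hpos']

theorem integrable_ite_eq_true {T : Ω → Bool} {Y0 Y1 : Ω → ℝ} (hT : Measurable T)
    (hY0 : Integrable Y0 μ) (hY1 : Integrable Y1 μ) :
    Integrable (fun ω => if T ω = true then Y1 ω else Y0 ω) μ :=
  Integrable.piecewise (s := {ω | T ω = true}) (hT (measurableSet_singleton true))
    hY1.integrableOn hY0.integrableOn

theorem integral_ite_sub_integral_ite_of_mono {T0 T1 : Ω → Bool} {Y0 Y1 : Ω → ℝ}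
    (hT0 : Measurable T0) (hT1 : Measurable T1) (hY0 : Integrable Y0 μ) (hY1 : Integrable Y1 μ)
    (hmono : ∀ ω, T0 ω = true → T1 ω = true) :
    (∫ ω, (if T1 ω = true then Y1 ω else Y0 ω) ∂μ) -
        ∫ ω, (if T0 ω = true then Y1 ω else Y0 ω) ∂μ =
      ∫ ω in {ω | T1 ω = true ∧ T0 ω = false}, (Y1 ω - Y0 ω) ∂μ := by
  have hC : MeasurableSet {ω | T1 ω = true ∧ T0 ω = false} :=
    (hT1 (measurableSet_singleton true)).inter (hT0 (measurableSet_singleton false))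
  rw [← integral_sub (integrable_ite_eq_true hT1 hY0 hY1) (integrable_ite_eq_true hT0 hY0 hY1),
    ← integral_indicator hC]
  congr 1
  funext ω
  have := hmono ω
  cases h0 : T0 ω <;> cases h1 : T1 ω <;> simp_all [Set.indicator]

theorem condMean_observed_eq_integral [IsFiniteMeasure μ] {Z T0 T1 : Ω → Bool} {Y0 Y1 : Ω → ℝ}
    (hZ : Measurable Z) (hT0 : Measurable T0) (hT1 : Measurable T1) (hY0 : AEMeasurable Y0 μ)
    (hY1 : AEMeasurable Y1 μ) (hind : IndepFun Z (fun ω => (T0 ω, T1 ω, Y0 ω, Y1 ω)) μ)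
    (b : Bool) (hb : μ {ω | Z ω = b} ≠ 0)
    {T : Ω → Bool} (hT : ∀ ω, T ω = if Z ω = true then T1 ω else T0 ω)
    {Y : Ω → ℝ} (hY : ∀ ω, Y ω = if T ω = true then Y1 ω else Y0 ω) :
    condMean μ {ω | Z ω = b} Y =
      ∫ ω, (if (if b = true then T1 ω else T0 ω) = true then Y1 ω else Y0 ω) ∂μ := by
  set g : Bool × Bool × ℝ × ℝ → ℝ :=
    fun q => if (if b = true then q.2.1 else q.1) = true then q.2.2.2 else q.2.2.1
  have hg : Measurable g := by
    refine Measurable.ite ((measurableSet_singleton true).preimage ?_) (by fun_prop) (by fun_prop)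
    cases b <;> simp only [Bool.false_eq_true, ↓reduceIte] <;> fun_prop
  have hYg : condMean μ {ω | Z ω = b} Y =
      condMean μ {ω | Z ω = b} (fun ω => g (T0 ω, T1 ω, Y0 ω, Y1 ω)) := by
    unfold condMean
    congr 1
    refine setIntegral_congr_fun (hZ (measurableSet_singleton b)) fun ω (hω : Z ω = b) => ?_
    simp only [g, hY, hT, hω]
  rw [hYg]
  exact hind.condMean_preimage_comp hZ (by fun_prop) (measurableSet_singleton b) hb
    hg.aestronglyMeasurable

end

theorem late_theorem_general
    {Ω : Type*} [MeasurableSpace Ω] (μ : Measure Ω) [IsProbabilityMeasure μ]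
    (Z T0 T1 : Ω → Bool) (Y0 Y1 : Ω → ℝ)
    (hZ : Measurable Z) (hT0 : Measurable T0) (hT1 : Measurable T1)
    (hY0 : Integrable Y0 μ) (hY1 : Integrable Y1 μ)
    (hZpos : 0 < μ {ω | Z ω = true}) (hZlt : μ {ω | Z ω = true} < 1)
    -- monotonicity: no defiers
    (hmono : ∀ ω, T0 ω = true → T1 ω = true)
    -- independence of the instrument from all potential quantities
    (hind : IndepFun Z (fun ω => (T0 ω, T1 ω, Y0 ω, Y1 ω)) μ)
    -- observed treatment and outcome (exclusion: Y depends on Z only through T)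
    (T : Ω → Bool) (hT : ∀ ω, T ω = if Z ω = true then T1 ω else T0 ω)
    (Y : Ω → ℝ) (hY : ∀ ω, Y ω = if T ω = true then Y1 ω else Y0 ω)
    (Tr : Ω → ℝ) (hTr : ∀ ω, Tr ω = if T ω = true then 1 else 0) :
    (condMean μ {ω | Z ω = true} Y - condMean μ {ω | Z ω = false} Y) /
      (condMean μ {ω | Z ω = true} Tr - condMean μ {ω | Z ω = false} Tr) =
    condMean μ {ω | T1 ω = true ∧ T0 ω = false} (fun ω => Y1 ω - Y0 ω) := by
  have hZ0 : μ {ω | Z ω = false} ≠ 0 := by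
    have hfalse : {ω | Z ω = false} = {ω | Z ω = true}ᶜ := by ext; simp
    have htrue : MeasurableSet {ω | Z ω = true} := hZ (measurableSet_singleton true)
    rw [hfalse, prob_compl_eq_one_sub htrue]
    exact (tsub_pos_of_lt hZlt).ne'
  have hindTr : IndepFun Z (fun ω => (T0 ω, T1 ω, (0 : ℝ), (1 : ℝ))) μ :=
    hind.comp measurable_id
      (by fun_prop : Measurable fun q : Bool × Bool × ℝ × ℝ => (q.1, q.2.1, (0 : ℝ), (1 : ℝ)))
  have obsY := condMean_observed_eq_integral hZ hT0 hT1 hY0.aemeasurable hY1.aemeasurable hind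
    (hT := hT) (hY := hY)
  have obsTr := condMean_observed_eq_integral hZ hT0 hT1 aemeasurable_const aemeasurable_const
    hindTr (hT := hT) (hY := hTr)
  rw [obsY true hZpos.ne', obsY false hZ0, obsTr true hZpos.ne', obsTr false hZ0]
  simp only [↓reduceIte, Bool.false_eq_true]
  rw [integral_ite_sub_integral_ite_of_mono hT0 hT1 hY0 hY1 hmono,
    integral_ite_sub_integral_ite_of_mono hT0 hT1 (integrable_const 0) (integrable_const 1) hmono]
  simp [condMean, measureReal_def]

/-- LATE theorem: with a binary instrument, monotonicity (no defiers), exclusion,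
independence, and a positive share of compliers, the Wald ratio equals the
average treatment effect among compliers. -/
theorem late_theorem
    {Ω : Type*} [MeasurableSpace Ω] (μ : Measure Ω) [IsProbabilityMeasure μ]
    (Z T0 T1 : Ω → Bool) (Y0 Y1 : Ω → ℝ)
    (hZ : Measurable Z) (hT0 : Measurable T0) (hT1 : Measurable T1)
    (hY0 : Integrable Y0 μ) (hY1 : Integrable Y1 μ)
    (hY0m : Measurable Y0) (hY1m : Measurable Y1)
    (hZpos : 0 < μ {ω | Z ω = true}) (hZlt : μ {ω | Z ω = true} < 1)
    -- monotonicity: no defiers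
    (hmono : ∀ ω, T0 ω = true → T1 ω = true)
    -- independence of the instrument from all potential quantities
    (hind : IndepFun Z (fun ω => (T0 ω, T1 ω, Y0 ω, Y1 ω)) μ)
    -- positive probability of compliers
    (hcompl : 0 < μ {ω | T1 ω = true ∧ T0 ω = false})
    -- observed treatment and outcome (exclusion: Y depends on Z only through T)
    (T : Ω → Bool) (hT : ∀ ω, T ω = if Z ω = true then T1 ω else T0 ω)
    (Y : Ω → ℝ) (hY : ∀ ω, Y ω = if T ω = true then Y1 ω else Y0 ω)
    (Tr : Ω → ℝ) (hTr : ∀ ω, Tr ω = if T ω = true then 1 else 0) :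
    (condMean μ {ω | Z ω = true} Y - condMean μ {ω | Z ω = false} Y) /
      (condMean μ {ω | Z ω = true} Tr - condMean μ {ω | Z ω = false} Tr) =
    condMean μ {ω | T1 ω = true ∧ T0 ω = false} (fun ω => Y1 ω - Y0 ω) :=
  late_theorem_general μ Z T0 T1 Y0 Y1 hZ hT0 hT1 hY0 hY1 hZpos hZlt hmono hind T hT Y hY Tr hTr
end

section
/- Back-door adjustment formula for the fork: in the structural model Z = U_Z, X = f(Z,U_X), Y = g(X,Z,U_Y) with independent noises, P(Y=y | do(X=x)) = Σ_z P(Z=z) · P(Y=y | X=x, Z=z), for all z with P(X=x, Z=z) > 0. -/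
/-!
Fix a stratum `Z = z`. There `X = f z U_X` and `Y = g x z U_Y` on `{X = x}`, so the event
`{Y = y, X = x, Z = z}` splits into independent conditions on `U_Z`, `U_X` and `U_Y`, and
conditioning on `X = x` only removes the factor `P(f z U_X = x)`:
`P(Y = y | X = x, Z = z) = P(g x z U_Y = y)`. The interventional outcome `g x Z U_Y` has, on the
same stratum, probability `P(Z = z) · P(g x z U_Y = y)` by independence of `U_Z` and `U_Y`; summing
over `z` gives the formula. Overlap makes the division legitimate wherever `P(Z = z) ≠ 0`.
-/

open MeasureTheory ProbabilityTheory

namespace MeasureTheory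

variable {Ω S : Type*} [MeasurableSpace Ω] {μ : Measure Ω}

lemma measure_eq_sum_measure_preimage_singleton_inter [Fintype S] [MeasurableSpace S]
    [MeasurableSingletonClass S] {V : Ω → S} (hV : Measurable V) (s : Set Ω) :
    μ s = ∑ z, μ (V ⁻¹' {z} ∩ s) := by
  calc μ s = μ.restrict s (V ⁻¹' Set.univ) := by
        rw [Set.preimage_univ, Measure.restrict_apply_univ]
    _ = ∑ z, μ.restrict s (V ⁻¹' {z}) := by
        rw [← Finset.coe_univ,
          ← sum_measure_preimage_singleton _ fun z _ => hV (measurableSet_singleton z)]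
    _ = ∑ z, μ (V ⁻¹' {z} ∩ s) := by
        simp only [Measure.restrict_apply (hV (measurableSet_singleton _))]

end MeasureTheory

namespace ProbabilityTheory

variable {Ω α β γ : Type*} [MeasurableSpace Ω] {μ : Measure Ω}

lemma IndepFun.measure_inter_preimage_inter_preimage_eq_mul
    [MeasurableSpace α] [MeasurableSpace β] [MeasurableSpace γ]
    {U : Ω → α} {V : Ω → β} {W : Ω → γ}
    (hUVW : IndepFun U (fun ω => (V ω, W ω)) μ) (hVW : IndepFun V W μ)
    {s : Set α} {t : Set β} {u : Set γ}
    (hs : MeasurableSet s) (ht : MeasurableSet t) (hu : MeasurableSet u) :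
    μ (U ⁻¹' s ∩ V ⁻¹' t ∩ W ⁻¹' u) = μ (U ⁻¹' s ∩ V ⁻¹' t) * μ (W ⁻¹' u) := by
  have hUV : μ (U ⁻¹' s ∩ V ⁻¹' t) = μ (U ⁻¹' s) * μ (V ⁻¹' t) := by
    simpa [Set.mk_preimage_prod] using
      hUVW.measure_inter_preimage_eq_mul s (t ×ˢ Set.univ) hs (ht.prod MeasurableSet.univ)
  rw [hUV, Set.inter_assoc, ← Set.mk_preimage_prod,
    hUVW.measure_inter_preimage_eq_mul s (t ×ˢ u) hs (ht.prod hu), Set.mk_preimage_prod,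
    hVW.measure_inter_preimage_eq_mul t u ht hu, mul_assoc]

end ProbabilityTheory

theorem backdoor_adjustment_general
    {Ω : Type*} [MeasurableSpace Ω] (μ : Measure Ω) [IsProbabilityMeasure μ]
    {SZ SX SY NX NY : Type*} [Fintype SZ]
    [Fintype NX] [Fintype NY]
    [MeasurableSpace SZ] [MeasurableSingletonClass SZ]
    [MeasurableSpace NX] [MeasurableSingletonClass NX]
    [MeasurableSpace NY] [MeasurableSingletonClass NY]
    (UZ : Ω → SZ) (UX : Ω → NX) (UY : Ω → NY)
    (hUZ : Measurable UZ)
    -- exogenous noises are mutually independent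
    (hind1 : IndepFun UZ (fun ω => (UX ω, UY ω)) μ)
    (hind2 : IndepFun UX UY μ)
    (f : SZ → NX → SX) (g : SX → SZ → NY → SY)
    (Z : Ω → SZ) (hZ : ∀ ω, Z ω = UZ ω)
    (X : Ω → SX) (hX : ∀ ω, X ω = f (Z ω) (UX ω))
    (Y : Ω → SY) (hY : ∀ ω, Y ω = g (X ω) (Z ω) (UY ω))
    (x : SX)
    -- overlap: positivity of P(X = x, Z = z) on the support of Z
    (hoverlap : ∀ z : SZ, 0 < μ {ω | Z ω = z} → 0 < μ {ω | X ω = x ∧ Z ω = z})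
    -- outcome under the intervention do(X = x)
    (Ydo : Ω → SY) (hYdo : ∀ ω, Ydo ω = g x (Z ω) (UY ω)) :
    ∀ y : SY,
      μ {ω | Ydo ω = y} =
        ∑ z : SZ, μ {ω | Z ω = z} *
          (μ {ω | Y ω = y ∧ X ω = x ∧ Z ω = z} / μ {ω | X ω = x ∧ Z ω = z}) := by
  intro y
  have hZ_eq : ∀ z, {ω | Z ω = z} = UZ ⁻¹' {z} := fun z => by ext ω; simp [hZ]
  have hXZ_eq : ∀ z, {ω | X ω = x ∧ Z ω = z} = UZ ⁻¹' {z} ∩ UX ⁻¹' {a | f z a = x} :=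
    fun z => by ext ω; grind
  have hYXZ_eq : ∀ z, {ω | Y ω = y ∧ X ω = x ∧ Z ω = z} =
      UZ ⁻¹' {z} ∩ UX ⁻¹' {a | f z a = x} ∩ UY ⁻¹' {b | g x z b = y} :=
    fun z => by ext ω; grind
  have hdo_eq : ∀ z, UZ ⁻¹' {z} ∩ {ω | Ydo ω = y} = UZ ⁻¹' {z} ∩ UY ⁻¹' {b | g x z b = y} :=
    fun z => by ext ω; grind
  have hind : IndepFun UZ UY μ := hind1.comp measurable_id measurable_snd
  rw [measure_eq_sum_measure_preimage_singleton_inter hUZ]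
  refine Finset.sum_congr rfl fun z _ => ?_
  rw [hdo_eq, hind.measure_inter_preimage_eq_mul _ _ (.singleton z) .of_discrete, hYXZ_eq,
    hind1.measure_inter_preimage_inter_preimage_eq_mul hind2 (.singleton z) .of_discrete
      .of_discrete, ← hXZ_eq, ← hZ_eq]
  rcases eq_or_ne (μ {ω | Z ω = z}) 0 with hz | hz
  · simp [hz]
  · rw [mul_comm (μ {ω | X ω = x ∧ Z ω = z}),
      ENNReal.mul_div_cancel_right (hoverlap z (pos_iff_ne_zero.2 hz)).ne' (measure_ne_top _ _)]

/-- Back-door adjustment for the fork/confounded model `Z = U_Z`, `X = f(Z,U_X)`,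
`Y = g(X,Z,U_Y)` with independent noises:
`P(Y=y | do(X=x)) = Σ_z P(Z=z) · P(Y=y | X=x, Z=z)`. -/
theorem backdoor_adjustment
    {Ω : Type*} [MeasurableSpace Ω] (μ : Measure Ω) [IsProbabilityMeasure μ]
    {SZ SX SY NX NY : Type*} [Fintype SZ] [Fintype SX] [Fintype SY]
    [Fintype NX] [Fintype NY]
    [MeasurableSpace SZ] [MeasurableSingletonClass SZ]
    [MeasurableSpace NX] [MeasurableSingletonClass NX]
    [MeasurableSpace NY] [MeasurableSingletonClass NY]
    (UZ : Ω → SZ) (UX : Ω → NX) (UY : Ω → NY)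
    (hUZ : Measurable UZ) (hUX : Measurable UX) (hUY : Measurable UY)
    -- exogenous noises are mutually independent
    (hind1 : IndepFun UZ (fun ω => (UX ω, UY ω)) μ)
    (hind2 : IndepFun UX UY μ)
    (f : SZ → NX → SX) (g : SX → SZ → NY → SY)
    (Z : Ω → SZ) (hZ : ∀ ω, Z ω = UZ ω)
    (X : Ω → SX) (hX : ∀ ω, X ω = f (Z ω) (UX ω))
    (Y : Ω → SY) (hY : ∀ ω, Y ω = g (X ω) (Z ω) (UY ω))
    (x : SX)
    -- overlap: positivity of P(X = x, Z = z) on the support of Z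
    (hoverlap : ∀ z : SZ, 0 < μ {ω | Z ω = z} → 0 < μ {ω | X ω = x ∧ Z ω = z})
    -- outcome under the intervention do(X = x)
    (Ydo : Ω → SY) (hYdo : ∀ ω, Ydo ω = g x (Z ω) (UY ω)) :
    ∀ y : SY,
      μ {ω | Ydo ω = y} =
        ∑ z : SZ, μ {ω | Z ω = z} *
          (μ {ω | Y ω = y ∧ X ω = x ∧ Z ω = z} / μ {ω | X ω = x ∧ Z ω = z}) :=
  backdoor_adjustment_general μ UZ UX UY hUZ hind1 hind2 f g Z hZ X hX Y hY x hoverlap Ydo hYdo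
end

section
/- Bounds without ignorability: for binary outcome with Y0, Y1 ∈ {0,1} and binary T with p := P(T=1) ∈ (0,1), the average treatment effect E[Y1] - E[Y0] always lies in the interval [p·E[Y|T=1] - (1-p)·E[Y|T=0] - p, p·E[Y|T=1] + (1-p) - (1-p)·E[Y|T=0]], i.e., the Manski worst-case bounds, an interval of width 1. -/
/-!
Split each mean over `{T = true}` and its complement. The observed pieces are
`∫_{T=1} Y1 = p · E[Y | T = 1]` and `∫_{T=0} Y0 = (1 - p) · E[Y | T = 0]`; the unobserved pieces
`∫_{T=0} Y1` and `∫_{T=1} Y0` integrate a `{0,1}`-valued function over a set of mass `1 - p`,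
resp. `p`, so they lie in `[0, 1 - p]`, resp. `[0, p]`.
-/

open MeasureTheory

open Set

namespace MeasureTheory

variable {Ω : Type*} [MeasurableSpace Ω] {μ : Measure Ω}

/-- Where `μ.real A = 0`, `condMean` is the junk value `x / 0 = 0` and both sides vanish. -/
theorem measureReal_mul_condMean [IsFiniteMeasure μ] (A : Set Ω) (f : Ω → ℝ) :
    μ.real A * condMean μ A f = ∫ ω in A, f ω ∂μ := by
  by_cases hA : μ.real A = 0
  · rw [measureReal_eq_zero_iff] at hA
    rw [setIntegral_measure_zero f hA, measureReal_def, hA]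
    simp
  · rw [condMean, ← measureReal_def]
    field_simp

theorem setIntegral_mem_Icc_of_mem_Icc [IsFiniteMeasure μ] {f : Ω → ℝ} {S : Set Ω}
    (hS : MeasurableSet S) (hf : Integrable f μ) (hf01 : ∀ ω, f ω ∈ Icc 0 1) :
    ∫ ω in S, f ω ∂μ ∈ Icc 0 (μ.real S) := by
  constructor
  · exact setIntegral_nonneg hS fun ω _ => (hf01 ω).1
  · calc ∫ ω in S, f ω ∂μ ≤ ∫ _ in S, (1 : ℝ) ∂μ :=
          setIntegral_mono_on hf.integrableOn (integrable_const 1).integrableOn hS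
            fun ω _ => (hf01 ω).2
      _ = μ.real S := by simp

theorem integral_eq_setIntegral_add_setIntegral_compl_of_eqOn {f g : Ω → ℝ} {A : Set Ω}
    (hA : MeasurableSet A) (hf : Integrable f μ) (hfg : EqOn g f A) :
    ∫ ω, f ω ∂μ = ∫ ω in A, g ω ∂μ + ∫ ω in Aᶜ, f ω ∂μ := by
  rw [setIntegral_congr_fun hA hfg, integral_add_compl hA hf]

end MeasureTheory

theorem mem_Icc_zero_one_of_eq_zero_or_eq_one {α : Type*} [Preorder α] [Zero α] [One α]
    [ZeroLEOneClass α] {x : α} (hx : x = 0 ∨ x = 1) : x ∈ Icc (0 : α) 1 := by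
  rcases hx with rfl | rfl
  · exact ⟨le_rfl, zero_le_one⟩
  · exact ⟨zero_le_one, le_rfl⟩

theorem manski_bounds_general
    {Ω : Type*} [MeasurableSpace Ω] (μ : Measure Ω) [IsProbabilityMeasure μ]
    (T : Ω → Bool) (Y0 Y1 : Ω → ℝ)
    (hT : Measurable T) (hY0 : Integrable Y0 μ) (hY1 : Integrable Y1 μ)
    (hY0b : ∀ ω, Y0 ω = 0 ∨ Y0 ω = 1) (hY1b : ∀ ω, Y1 ω = 0 ∨ Y1 ω = 1)
    (Y : Ω → ℝ) (hY : ∀ ω, Y ω = if T ω = true then Y1 ω else Y0 ω)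
    (p : ℝ) (hp : p = (μ {ω | T ω = true}).toReal) :
    (∫ ω, Y1 ω ∂μ) - (∫ ω, Y0 ω ∂μ) ∈ Set.Icc
      (p * condMean μ {ω | T ω = true} Y -
        (1 - p) * condMean μ {ω | T ω = false} Y - p)
      (p * condMean μ {ω | T ω = true} Y + (1 - p) -
        (1 - p) * condMean μ {ω | T ω = false} Y) := by
  set A := {ω | T ω = true}
  have hA : MeasurableSet A := hT (measurableSet_singleton true)
  have hAc : {ω | T ω = false} = Aᶜ := by ext; simp [A]
  have hpA : μ.real A = p := hp.symm
  have hpAc : μ.real Aᶜ = 1 - p := by rw [probReal_compl_eq_one_sub hA, hpA]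
  have hE1 : ∫ ω, Y1 ω ∂μ = p * condMean μ A Y + ∫ ω in Aᶜ, Y1 ω ∂μ := by
    rw [← hpA, measureReal_mul_condMean]
    refine integral_eq_setIntegral_add_setIntegral_compl_of_eqOn hA hY1 fun ω hω => ?_
    simp [hY ω, show T ω = true from hω]
  have hE0 : ∫ ω, Y0 ω ∂μ = (1 - p) * condMean μ Aᶜ Y + ∫ ω in A, Y0 ω ∂μ := by
    rw [← hpAc, measureReal_mul_condMean]
    nth_rw 2 [← compl_compl A]
    refine integral_eq_setIntegral_add_setIntegral_compl_of_eqOn hA.compl hY0 fun ω hω => ?_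
    simp [hY ω, show T ω = false by simpa [A] using hω]
  have h1 := setIntegral_mem_Icc_of_mem_Icc hA.compl hY1
    fun ω => mem_Icc_zero_one_of_eq_zero_or_eq_one (hY1b ω)
  have h0 := setIntegral_mem_Icc_of_mem_Icc hA hY0
    fun ω => mem_Icc_zero_one_of_eq_zero_or_eq_one (hY0b ω)
  rw [hpAc] at h1
  rw [hpA] at h0
  rw [hAc, hE1, hE0]
  constructor <;> linarith [h1.1, h1.2, h0.1, h0.2]

/-- Manski worst-case bounds: without ignorability, for binary potential
outcomes the ATE lies in an interval of width 1 determined by the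
observable quantities. -/
theorem manski_bounds
    {Ω : Type*} [MeasurableSpace Ω] (μ : Measure Ω) [IsProbabilityMeasure μ]
    (T : Ω → Bool) (Y0 Y1 : Ω → ℝ)
    (hT : Measurable T) (hY0 : Integrable Y0 μ) (hY1 : Integrable Y1 μ)
    (hY0b : ∀ ω, Y0 ω = 0 ∨ Y0 ω = 1) (hY1b : ∀ ω, Y1 ω = 0 ∨ Y1 ω = 1)
    (hpos : 0 < μ {ω | T ω = true}) (hlt : μ {ω | T ω = true} < 1)
    (Y : Ω → ℝ) (hY : ∀ ω, Y ω = if T ω = true then Y1 ω else Y0 ω)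
    (p : ℝ) (hp : p = (μ {ω | T ω = true}).toReal) :
    (∫ ω, Y1 ω ∂μ) - (∫ ω, Y0 ω ∂μ) ∈ Set.Icc
      (p * condMean μ {ω | T ω = true} Y -
        (1 - p) * condMean μ {ω | T ω = false} Y - p)
      (p * condMean μ {ω | T ω = true} Y + (1 - p) -
        (1 - p) * condMean μ {ω | T ω = false} Y) :=
  manski_bounds_general μ T Y0 Y1 hT hY0 hY1 hY0b hY1b Y hY p hp
end
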